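/- Let G be a bipartite graph with parts U and V (all edges join U to V) and let K be an integer with 1 ≤ K ≤ |V|. Consider the OWA-Winner instance whose agents are the vertices of U, whose items are the vertices of V, where the utility of agent w for item v is 1 if {w, v} is an edge of G and 0 otherwise, with committee size K and the K-median OWA (0, …, 0, 1) of length K. Then: (i) for every S ⊆ V with |S| = K, u^{K-med}(S) = |{w ∈ U : w is adjacent to every v ∈ S}|; and (ii) K · max_{S ⊆ V, |S| = K} u^{K-med}(S) equals the maximum number of edges of a complete bipartite subgraph X × S of G with X ⊆ U, S ⊆ V, and |S| = K. -/

import Mathlib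

/-! Under the `K`-median OWA an agent values a `K`-set at its least utility for a member, which
for `0/1` utilities is `1` exactly when the agent is adjacent to the whole set. So `u(S)` counts
the common neighbours of `S`, and among the bicliques `X × S` with a given `S` the largest takes
`X` to be these common neighbours and has `K · u(S)` edges. -/

open Finset

/-- The OWA-aggregated total utility of a set `W` of items: for each agent `i` in `N`,
the intrinsic utilities of the items of `W` are sorted in nonincreasing order
`x_0 ≥ x_1 ≥ …` and the agent contributes `∑_{j < K} α j * x_j`
(positions beyond `|W|` contribute `0`).  The OWA vector is `0`-indexed:
`α j` is entry `α_{j+1}` of the paper. -/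
noncomputable def owaUtil {I A : Type*} [DecidableEq A]
    (N : Finset I) (u : I → A → ℝ) (K : ℕ) (α : ℕ → ℝ) (W : Finset A) : ℝ :=
  ∑ i ∈ N, ∑ j ∈ Finset.range K,
    α j * (((W.1.map (u i)).sort (· ≤ ·)).reverse.getD j 0)

open scoped Classical

/-- The `K`-median total utility of a size-`K` set `S ⊆ V` in the instance obtained
from a bipartite graph with parts `U`, `V` and edge relation `E`: agents are the
vertices of `U`, the utility of `w` for `v` is `1` if `E w v` and `0` otherwise, and
the OWA is the `K`-median `(0, …, 0, 1)`. -/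
noncomputable def stmt11util {U V : Type*} [Fintype U] [DecidableEq V]
    (E : U → V → Prop) [∀ w v, Decidable (E w v)] (K : ℕ) : Finset V → ℝ :=
  owaUtil (Finset.univ : Finset U)
    (fun w v => if E w v then (1 : ℝ) else 0)
    K (fun j => if j = K - 1 then (1 : ℝ) else 0)

theorem Finset.getD_reverse_sort_map_card_sub_one {α β : Type*} [LinearOrder β]
    {W : Finset α} (hW : W.Nonempty) (f : α → β) (d : β) :
    ((W.1.map f).sort (· ≤ ·)).reverse.getD (#W - 1) d = W.inf' hW f := by
  have hlen : ((W.1.map f).sort (· ≤ ·)).length = #W := by simp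
  have hsorted := Multiset.pairwise_sort (W.1.map f) (· ≤ ·)
  have hmem (b : β) : b ∈ (W.1.map f).sort (· ≤ ·) ↔ ∃ v ∈ W, f v = b := by simp
  obtain ⟨a, t, hL⟩ := List.exists_cons_of_ne_nil <|
    List.ne_nil_of_length_pos (hlen ▸ hW.card_pos)
  have hlast : ((W.1.map f).sort (· ≤ ·)).reverse.getD (#W - 1) d = a := by
    rw [← hlen, hL]
    simp
  rw [hlast]
  rw [hL] at hsorted hmem
  obtain ⟨v, hv, rfl⟩ := (hmem a).1 (List.mem_cons_self ..)
  refine le_antisymm (le_inf' hW f fun w hw => ?_) (inf'_le f hv)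
  obtain hw | hw := List.mem_cons.1 ((hmem (f w)).2 ⟨w, hw, rfl⟩)
  · exact hw.ge
  · exact List.rel_of_pairwise_cons hsorted hw

theorem owaUtil_kMedian {I A : Type*} [DecidableEq A] (N : Finset I) (u : I → A → ℝ)
    {W : Finset A} (hW : W.Nonempty) :
    owaUtil N u #W (fun j => if j = #W - 1 then 1 else 0) W = ∑ i ∈ N, W.inf' hW (u i) := by
  refine sum_congr rfl fun i _ => ?_
  rw [sum_eq_single_of_mem (#W - 1) (mem_range.2 (Nat.sub_lt hW.card_pos one_pos))]
  · simp only [↓reduceIte, one_mul, getD_reverse_sort_map_card_sub_one hW]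
  · intro j _ hj
    simp only [hj, ↓reduceIte, zero_mul]

theorem Finset.inf'_boole {α : Type*} {W : Finset α} (hW : W.Nonempty) (p : α → Prop)
    [DecidablePred p] [Decidable (∀ v ∈ W, p v)] :
    W.inf' hW (fun v => if p v then (1 : ℝ) else 0) = if ∀ v ∈ W, p v then 1 else 0 := by
  split_ifs with h
  · rw [inf'_congr hW rfl fun v hv => if_pos (h v hv), inf'_const]
  · obtain ⟨v, hv, hpv⟩ := not_forall₂.1 h
    exact le_antisymm ((inf'_le _ hv).trans_eq (if_neg hpv))
      (le_inf' hW _ fun w _ => by split_ifs <;> norm_num)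

theorem stmt11util_eq_card {U V : Type*} [Fintype U] [DecidableEq V]
    (E : U → V → Prop) [∀ w v, Decidable (E w v)] {S : Finset V} (hS : S.Nonempty) :
    stmt11util E #S S = #{w | ∀ v ∈ S, E w v} := by
  rw [stmt11util, owaUtil_kMedian _ _ hS]
  simp only [inf'_boole, sum_boole]

theorem stmt_11_general {U V : Type*} [Fintype U] [Fintype V] [DecidableEq V]
    (E : U → V → Prop) [∀ w v, Decidable (E w v)]
    (K : ℕ) (hK : 1 ≤ K)
    (hne : ((Finset.univ : Finset V).powersetCard K).Nonempty) :
    (∀ S : Finset V, S.card = K →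
      stmt11util E K S =
        (((Finset.univ : Finset U).filter (fun w => ∀ v ∈ S, E w v)).card : ℝ)) ∧
    (∃ (X : Finset U) (S : Finset V), S.card = K ∧ (∀ w ∈ X, ∀ v ∈ S, E w v) ∧
      (K : ℝ) * ((Finset.univ : Finset V).powersetCard K).sup' hne (stmt11util E K) =
        ((X.card * S.card : ℕ) : ℝ) ∧
      ∀ (X' : Finset U) (S' : Finset V), S'.card = K →
        (∀ w ∈ X', ∀ v ∈ S', E w v) →
        ((X'.card * S'.card : ℕ) : ℝ) ≤
          (K : ℝ) * ((Finset.univ : Finset V).powersetCard K).sup' hne (stmt11util E K)) := by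
  have hutil (S : Finset V) (hS : #S = K) :
      stmt11util E K S = #{w | ∀ v ∈ S, E w v} := by
    subst hS
    convert stmt11util_eq_card E (card_pos.1 hK)
  have hcard {S : Finset V} (hS : S ∈ univ.powersetCard K) : #S = K := (mem_powersetCard.1 hS).2
  obtain ⟨S₀, hS₀, hsup⟩ := exists_mem_eq_sup' hne (stmt11util E K)
  refine ⟨hutil, ({w | ∀ v ∈ S₀, E w v} : Finset U), S₀, hcard hS₀, fun w hw => (mem_filter.1 hw).2, ?_, ?_⟩
  · rw [hsup, hutil S₀ (hcard hS₀), hcard hS₀]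
    push_cast
    ring
  · intro X' S' hS' hX'
    have hX'_le : #X' ≤ #{w | ∀ v ∈ S', E w v} :=
      card_le_card fun w hw => mem_filter.2 ⟨mem_univ w, hX' w hw⟩
    calc ((#X' * #S' : ℕ) : ℝ) ≤ K * stmt11util E K S' := by
          rw [hutil S' hS', hS', mul_comm]
          push_cast
          gcongr
      _ ≤ _ := by
          gcongr
          exact le_sup' _ (mem_powersetCard.2 ⟨subset_univ S', hS'⟩)

/-- Correctness of the reduction from Maximum Edge Biclique to `K`-median-OWA-Winner:
(i) every size-`K` set `S ⊆ V` has utility `#{w ∈ U : w adjacent to all of S}`, and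
(ii) `K` times the optimal utility equals the maximum number of edges of a complete
bipartite subgraph `X × S` of `G` with `|S| = K`. -/
theorem stmt_11 {U V : Type*} [Fintype U] [Fintype V] [DecidableEq V]
    (E : U → V → Prop) [∀ w v, Decidable (E w v)]
    (K : ℕ) (hK : 1 ≤ K) (hKV : K ≤ Fintype.card V)
    (hne : ((Finset.univ : Finset V).powersetCard K).Nonempty) :
    (∀ S : Finset V, S.card = K →
      stmt11util E K S =
        (((Finset.univ : Finset U).filter (fun w => ∀ v ∈ S, E w v)).card : ℝ)) ∧
    (∃ (X : Finset U) (S : Finset V), S.card = K ∧ (∀ w ∈ X, ∀ v ∈ S, E w v) ∧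
      (K : ℝ) * ((Finset.univ : Finset V).powersetCard K).sup' hne (stmt11util E K) =
        ((X.card * S.card : ℕ) : ℝ) ∧
      ∀ (X' : Finset U) (S' : Finset V), S'.card = K →
        (∀ w ∈ X', ∀ v ∈ S', E w v) →
        ((X'.card * S'.card : ℕ) : ℝ) ≤
          (K : ℝ) * ((Finset.univ : Finset V).powersetCard K).sup' hne (stmt11util E K)) :=
  stmt_11_general E K hK hne
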